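/- Fix L and K ≥ 1, and consider the general K-hop shortest-path-distance color refinement. At every iteration l ≤ L: the K-hop configuration is at least as powerful as the GINE+ configuration, and the GINE+ configuration is at least as powerful as the 1-WL configuration (for all finite simple graphs G1, G2 and vertices v ∈ G1, u ∈ G2, equality of refined classes under the stronger configuration implies equality under the weaker one). Moreover, the GINE+ configuration is strictly more powerful than the 1-WL configuration: there exist finite simple graphs with equally many vertices (the 6-cycle C_6 and the disjoint union of two triangles) such that the 1-WL configuration never separates any vertex of one from any vertex of the other, while the 2-hop GINE+ configuration separates them at iteration 2. -/
import Mathlib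

/-!
STATEMENT 7: In the general K-hop spd color refinement: the K-hop configuration is at
least as powerful as the GINE+ configuration, which is at least as powerful as the
1-WL configuration, at every iteration l ≤ L; and GINE+ is strictly more powerful than
1-WL, witnessed by the 6-cycle C₆ versus the disjoint union of two triangles.
-/

namespace KHopStmt7

/-- k-th hop neighbors under the shortest-path-distance kernel: vertices at graph
distance exactly `k` from `v` (so `Qspd G v 0 = {v}`). -/
noncomputable def Qspd {V : Type*} [Fintype V] (G : SimpleGraph V) (v : V) (k : ℕ) :
    Finset V := by
  classical
  exact Finset.univ.filter fun u => G.Reachable v u ∧ G.dist v u = k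

/-- The general K-hop shortest-path-distance color refinement determined by a
refinement configuration `C`: `v ≈^C_0 u` always, and `v ≈^C_{l+1} u` iff for every
`k ≤ K` and every `s ∈ C l k` there is a bijection of the k-th hop neighborhoods
matching `≈^C_s`-equivalent vertices. (The guard `s ≤ l` is automatic for genuine
refinement configurations and makes the recursion well-founded.) -/
def CREquiv {V1 V2 : Type*} [Fintype V1] [Fintype V2] (K : ℕ) (C : ℕ → ℕ → Finset ℕ)
    (G1 : SimpleGraph V1) (G2 : SimpleGraph V2) : ℕ → V1 → V2 → Prop
  | 0, _, _ => True
  | (l + 1), v, u =>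
      ∀ k ≤ K, ∀ s ∈ C l k, s ≤ l →
        ∃ σ : {w // w ∈ Qspd G1 v k} ≃ {w // w ∈ Qspd G2 u k},
          ∀ w : {w // w ∈ Qspd G1 v k}, CREquiv K C G1 G2 s w.1 (σ w).1
  termination_by l => l
  decreasing_by omega

/-- The 1-WL refinement configuration: `C^l_0 = C^l_1 = {l}`, `C^l_k = ∅` for `k ≥ 2`. -/
def oneWLConfig : ℕ → ℕ → Finset ℕ := fun l k => if k ≤ 1 then {l} else ∅

/-- The K-hop refinement configuration: `C^l_k = {l}` for all `k ∈ {0,…,K}`. -/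
def khopConfig (K : ℕ) : ℕ → ℕ → Finset ℕ := fun l k => if k ≤ K then {l} else ∅

/-- The GINE+ refinement configuration: `C^l_0 = {l}`, `C^l_k = {l−k+1}` for
`1 ≤ k ≤ min (l+1) K`, and `C^l_k = ∅` otherwise. -/
def ginepConfig (K : ℕ) : ℕ → ℕ → Finset ℕ := fun l k =>
  if k = 0 then {l}
  else if k ≤ min (l + 1) K then {l + 1 - k}
  else ∅

/-- The disjoint union of two triangles, as a graph on `Fin 6`
(vertices `{0,1,2}` and `{3,4,5}` each forming a triangle). -/
def twoTriangles : SimpleGraph (Fin 6) :=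
  SimpleGraph.fromRel fun i j => i.val / 3 = j.val / 3

open SimpleGraph

lemma CREquiv_zero {V1 V2 : Type*} [Fintype V1] [Fintype V2] (K : ℕ) (C : ℕ → ℕ → Finset ℕ)
    (G1 : SimpleGraph V1) (G2 : SimpleGraph V2) (v : V1) (u : V2) :
    CREquiv K C G1 G2 0 v u := by rw [CREquiv]; trivial

lemma CREquiv_succ {V1 V2 : Type*} [Fintype V1] [Fintype V2] (K : ℕ) (C : ℕ → ℕ → Finset ℕ)
    (G1 : SimpleGraph V1) (G2 : SimpleGraph V2) (l : ℕ) (v : V1) (u : V2) :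
    CREquiv K C G1 G2 (l + 1) v u ↔
      ∀ k ≤ K, ∀ s ∈ C l k, s ≤ l →
        ∃ σ : {w // w ∈ Qspd G1 v k} ≃ {w // w ∈ Qspd G2 u k},
          ∀ w : {w // w ∈ Qspd G1 v k}, CREquiv K C G1 G2 s w.1 (σ w).1 := by
  rw [CREquiv]

lemma khop_mono (K : ℕ) : ∀ l, ∀ s ≤ l, ∀ (V1 V2 : Type*) [Fintype V1] [Fintype V2]
    (G1 : SimpleGraph V1) (G2 : SimpleGraph V2) (v : V1) (u : V2),
    CREquiv K (khopConfig K) G1 G2 l v u → CREquiv K (khopConfig K) G1 G2 s v u := by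
  intro l
  induction l with
  | zero =>
    intro s hs
    obtain rfl : s = 0 := by omega
    intros; exact CREquiv_zero _ _ _ _ _ _
  | succ l IH =>
    intro s hs V1 V2 _ _ G1 G2 v u h
    rcases Nat.eq_or_lt_of_le hs with rfl | hlt
    · exact h
    · match s with
      | 0 => exact CREquiv_zero _ _ _ _ _ _
      | t + 1 =>
        rw [CREquiv_succ] at h ⊢
        intro k hk s' hs' hs't
        have he : s' = t := by simpa [khopConfig, if_pos hk] using hs'
        rw [he]
        obtain ⟨σ, hσ⟩ := h k hk l (by simp [khopConfig, if_pos hk]) le_rfl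
        exact ⟨σ, fun w => IH t (by omega) _ _ _ _ _ _ (hσ w)⟩

lemma khop_le_ginep (K : ℕ) : ∀ l, ∀ s ≤ l, ∀ (V1 V2 : Type*) [Fintype V1] [Fintype V2]
    (G1 : SimpleGraph V1) (G2 : SimpleGraph V2) (v : V1) (u : V2),
    CREquiv K (khopConfig K) G1 G2 s v u → CREquiv K (ginepConfig K) G1 G2 s v u := by
  intro l
  induction l with
  | zero =>
    intro s hs
    obtain rfl : s = 0 := by omega
    intros; exact CREquiv_zero _ _ _ _ _ _
  | succ l IH =>
    intro s hs V1 V2 _ _ G1 G2 v u h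
    match s, hs with
    | 0, _ => exact CREquiv_zero _ _ _ _ _ _
    | t + 1, hs =>
      rw [CREquiv_succ] at h ⊢
      intro k hk s' hs' hs't
      obtain ⟨σ, hσ⟩ := h k hk t (by simp [khopConfig, if_pos hk]) le_rfl
      exact ⟨σ, fun w =>
        IH s' (by omega) _ _ _ _ _ _ (khop_mono K t s' hs't _ _ _ _ _ _ (hσ w))⟩

lemma ginep_le_oneWL (K : ℕ) (hK : 1 ≤ K) : ∀ l, ∀ (V1 V2 : Type*) [Fintype V1] [Fintype V2]
    (G1 : SimpleGraph V1) (G2 : SimpleGraph V2) (v : V1) (u : V2),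
    CREquiv K (ginepConfig K) G1 G2 l v u → CREquiv K oneWLConfig G1 G2 l v u := by
  intro l
  induction l with
  | zero => intros; exact CREquiv_zero _ _ _ _ _ _
  | succ l IH =>
    intro V1 V2 _ _ G1 G2 v u h
    rw [CREquiv_succ] at h ⊢
    intro k hk s hs hsl
    by_cases hk1 : k ≤ 1
    · have he : s = l := by simpa [oneWLConfig, if_pos hk1] using hs
      rw [he]
      have hmem : l ∈ ginepConfig K l k := by
        match k, hk1 with
        | 0, _ => simp [ginepConfig]
        | 1, _ => simp [ginepConfig, hK]
      obtain ⟨σ, hσ⟩ := h k hk l hmem le_rfl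
      exact ⟨σ, fun w => IH _ _ _ _ _ _ (hσ w)⟩
    · simp [oneWLConfig, if_neg hk1] at hs

lemma mem_Qspd {V : Type*} [Fintype V] {G : SimpleGraph V} {v w : V} {k : ℕ} :
    w ∈ Qspd G v k ↔ G.Reachable v w ∧ G.dist v w = k := by
  classical
  simp [Qspd]

lemma Qspd_zero {V : Type*} [Fintype V] (G : SimpleGraph V) (v : V) :
    Qspd G v 0 = {v} := by
  ext w
  simp only [mem_Qspd, Finset.mem_singleton]
  constructor
  · rintro ⟨hr, hd⟩
    exact (hr.dist_eq_zero_iff.mp hd).symm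
  · rintro rfl
    exact ⟨Reachable.refl w, SimpleGraph.dist_self⟩

lemma Qspd_one {V : Type*} [Fintype V] [DecidableEq V] (G : SimpleGraph V)
    [DecidableRel G.Adj] (v : V) : Qspd G v 1 = G.neighborFinset v := by
  ext w
  simp only [mem_Qspd, mem_neighborFinset]
  constructor
  · rintro ⟨hr, hd⟩
    exact SimpleGraph.dist_eq_one_iff_adj.mp hd
  · intro ha
    exact ⟨ha.reachable, SimpleGraph.dist_eq_one_iff_adj.mpr ha⟩

instance : DecidableRel twoTriangles.Adj := fun a b =>
  decidable_of_iff (a ≠ b ∧ ((a : Fin 6).val / 3 = b.val / 3 ∨ b.val / 3 = a.val / 3))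
    (by rw [twoTriangles, SimpleGraph.fromRel_adj])

lemma tt_degree : ∀ v : Fin 6, twoTriangles.degree v = 2 := by decide

lemma tt_block {u w : Fin 6} (h : twoTriangles.Reachable u w) : u.val / 3 = w.val / 3 := by
  obtain ⟨p⟩ := h
  induction p with
  | nil => rfl
  | cons ha _ ih =>
    have := (SimpleGraph.fromRel_adj _ _ _).mp ha
    omega

lemma tt_dist_le (u w : Fin 6) (h : twoTriangles.Reachable u w) :
    twoTriangles.dist u w ≤ 1 := by
  by_cases he : u = w
  · subst he
    exact le_trans (le_of_eq SimpleGraph.dist_self) (by omega)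
  · have hb := tt_block h
    have ha : twoTriangles.Adj u w := (SimpleGraph.fromRel_adj _ _ _).mpr ⟨he, Or.inl hb⟩
    exact le_of_eq (SimpleGraph.dist_eq_one_iff_adj.mpr ha)

lemma Qspd_tt_two (u : Fin 6) : Qspd twoTriangles u 2 = ∅ := by
  ext w
  simp only [mem_Qspd, Finset.notMem_empty, iff_false, not_and]
  intro hr hd
  have := tt_dist_le u w hr
  omega

lemma c6_dist_two : (SimpleGraph.cycleGraph 6).dist 0 2 = 2 := by
  have h01 : (SimpleGraph.cycleGraph 6).Adj 0 1 := by rw [cycleGraph_adj]; decide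
  have h12 : (SimpleGraph.cycleGraph 6).Adj 1 2 := by rw [cycleGraph_adj]; decide
  have hle : (SimpleGraph.cycleGraph 6).dist 0 2 ≤ 2 := by
    have := SimpleGraph.dist_le (h01.toWalk.append h12.toWalk)
    simpa [SimpleGraph.Walk.length_append] using this
  have hne : (0 : Fin 6) ≠ 2 := by decide
  have hna : ¬ (SimpleGraph.cycleGraph 6).Adj 0 2 := by rw [cycleGraph_adj]; decide
  have hr : (SimpleGraph.cycleGraph 6).Reachable 0 2 := ⟨h01.toWalk.append h12.toWalk⟩
  have h0 : (SimpleGraph.cycleGraph 6).dist 0 2 ≠ 0 := fun hc =>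
    hne (hr.dist_eq_zero_iff.mp hc)
  have h1 : (SimpleGraph.cycleGraph 6).dist 0 2 ≠ 1 := fun hc =>
    hna (SimpleGraph.dist_eq_one_iff_adj.mp hc)
  omega

lemma c6_mem_two : (2 : Fin 6) ∈ Qspd (SimpleGraph.cycleGraph 6) 0 2 := by
  rw [mem_Qspd]
  refine ⟨?_, c6_dist_two⟩
  have h01 : (SimpleGraph.cycleGraph 6).Adj 0 1 := by rw [cycleGraph_adj]; decide
  have h12 : (SimpleGraph.cycleGraph 6).Adj 1 2 := by rw [cycleGraph_adj]; decide
  exact h01.reachable.trans h12.reachable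

lemma oneWL_all (K : ℕ) : ∀ l (v u : Fin 6),
    CREquiv K oneWLConfig (SimpleGraph.cycleGraph 6) twoTriangles l v u := by
  intro l
  induction l with
  | zero => intro v u; exact CREquiv_zero _ _ _ _ _ _
  | succ l IH =>
    intro v u
    rw [CREquiv_succ]
    intro k hk s hs hsl
    by_cases hk1 : k ≤ 1
    · have he : s = l := by simpa [oneWLConfig, if_pos hk1] using hs
      rw [he]
      have hcard : Fintype.card {w // w ∈ Qspd (SimpleGraph.cycleGraph 6) v k}
          = Fintype.card {w // w ∈ Qspd twoTriangles u k} := by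
        rw [Fintype.card_coe, Fintype.card_coe]
        match k, hk1 with
        | 0, _ => rw [Qspd_zero, Qspd_zero, Finset.card_singleton, Finset.card_singleton]
        | 1, _ =>
          rw [Qspd_one, Qspd_one]
          show (SimpleGraph.cycleGraph 6).degree v = twoTriangles.degree u
          rw [tt_degree u, cycleGraph_degree_three_le]
      exact ⟨Fintype.equivOfCardEq hcard, fun w => IH _ _⟩
    · simp [oneWLConfig, if_neg hk1] at hs

/-- At every iteration `l ≤ L`, the K-hop configuration is at least as
powerful as the GINE+ configuration, and the GINE+ configuration is at least as powerful
as the 1-WL configuration. Moreover GINE+ is strictly more powerful than 1-WL: on the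
6-cycle versus two disjoint triangles, the 1-WL configuration never separates any vertex
of one from any vertex of the other, while the 2-hop GINE+ configuration separates the
two graphs at iteration 2 (no bijection of the vertex sets matches the iteration-2
refined classes). -/
theorem khop_ge_ginep_ge_oneWL (K L : ℕ) (hK : 1 ≤ K) :
    (∀ l ≤ L, ∀ (V1 V2 : Type) [Fintype V1] [Fintype V2]
        (G1 : SimpleGraph V1) (G2 : SimpleGraph V2) (v : V1) (u : V2),
        CREquiv K (khopConfig K) G1 G2 l v u → CREquiv K (ginepConfig K) G1 G2 l v u) ∧
    (∀ l ≤ L, ∀ (V1 V2 : Type) [Fintype V1] [Fintype V2]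
        (G1 : SimpleGraph V1) (G2 : SimpleGraph V2) (v : V1) (u : V2),
        CREquiv K (ginepConfig K) G1 G2 l v u → CREquiv K oneWLConfig G1 G2 l v u) ∧
    (∀ (l : ℕ) (v : Fin 6) (u : Fin 6),
        CREquiv K oneWLConfig (SimpleGraph.cycleGraph 6) twoTriangles l v u) ∧
    ¬ ∃ σ : Fin 6 ≃ Fin 6, ∀ v : Fin 6,
        CREquiv 2 (ginepConfig 2) (SimpleGraph.cycleGraph 6) twoTriangles 2 v (σ v) := by
  refine ⟨?_, ?_, ?_, ?_⟩
  · intro l _ V1 V2 _ _ G1 G2 v u h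
    exact khop_le_ginep K l l le_rfl _ _ _ _ _ _ h
  · intro l _ V1 V2 _ _ G1 G2 v u h
    exact ginep_le_oneWL K hK l _ _ _ _ _ _ h
  · exact oneWL_all K
  · rintro ⟨σ, hσ⟩
    have h := hσ 0
    rw [CREquiv_succ] at h
    obtain ⟨σ', hσ'⟩ := h 2 le_rfl 0 (by decide) (by omega)
    have hm := (σ' ⟨2, c6_mem_two⟩).2
    rw [mem_Qspd] at hm
    obtain ⟨hr, hd⟩ := hm
    have := tt_dist_le _ _ hr
    omega

end KHopStmt7
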